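/- (A posteriori error estimate, unsteady case.) Let T > 0. Let A₁ ∈ ℝ^{N₁×N₁}, A₂ ∈ ℝ^{N₂×N₂} and C₁, C₂ ≥ 0 satisfy ‖exp(s A₁)‖₂ ≤ C₁ and ‖exp(s A₂)‖₂ ≤ C₂ for all s ∈ [0,T]. Let 0 < M < N₂, let Φ ∈ ℝ^{N₂×M} have orthonormal columns, let P ∈ ℝ^{N₂×M} be a selection matrix (columns distinct standard basis vectors of ℝ^{N₂}) with PᵀΦ invertible, let U ∈ ℝ^{M×N₁}, and set C₃ := ‖Φ (PᵀΦ)⁻¹ U‖₂. Suppose: (i) f₁ : [0,T] → ℝ^{N₁} and g₂ : [0,T] → ℝ^{N₂} are continuous; (ii) u₁ : [0,T] → ℝ^{N₁} satisfies u₁′(t) = A₁ u₁(t) + f₁(t); (iii) u_D : [0,T] → ℝ^{N₂} satisfies U u₁(t) = Pᵀ u_D(t) for all t ∈ [0,T]; (iv) ũ₂ : [0,T] → ℝ^{N₂} satisfies ũ₂′(t) = A₂ ũ₂(t) + g₂(t), and u₂(t) := ũ₂(t) + u_D(t). Let V₁ ∈ ℝ^{N₁×n₁}, V₂ ∈ ℝ^{N₂×n₂},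 let u_{n₁} : [0,T] → ℝ^{n₁} and ũ_{n₂} : [0,T] → ℝ^{n₂} be continuously differentiable, define the residuals r₁(t) := A₁ V₁ u_{n₁}(t) + f₁(t) − V₁ u_{n₁}′(t) and r₂(t) := A₂ V₂ ũ_{n₂}(t) + g₂(t) − V₂ ũ_{n₂}′(t), and define the reduced slave approximation w₂(t) := V₂ ũ_{n₂}(t) + Φ (PᵀΦ)⁻¹ U V₁ u_{n₁}(t). Then for every t ∈ [0,T]: ‖u₂(t) − w₂(t)‖₂ ≤ C₂ ‖ũ₂(0) − V₂ ũ_{n₂}(0)‖₂ + C₂ ∫₀ᵗ ‖r₂(τ)‖₂ dτ + ‖(PᵀΦ)⁻¹‖₂ · ‖u_D(t) − Φ Φᵀ u_D(t)‖₂ + C₁ C₃ ‖u₁(0) − V₁ u_{n₁}(0)‖₂ + C₁ C₃ ∫₀ᵗ ‖r₁(τ)‖₂ dτ. -/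

import Mathlib

open Matrix
open scoped Matrix.Norms.L2Operator

/-- Multiplication of a real matrix with a Euclidean vector, valued in Euclidean space
(so that `‖·‖` is the Euclidean 2-norm). -/
noncomputable def mulVecE {m n : ℕ} (A : Matrix (Fin m) (Fin n) ℝ)
    (x : EuclideanSpace ℝ (Fin n)) : EuclideanSpace ℝ (Fin m) :=
  Matrix.toEuclideanLin A x

/-- `P : ℝ^{N×M}` is a selection matrix: its `M` columns are distinct standard basis
vectors of `ℝ^N`. -/
def IsSelectionMatrix {N M : ℕ} (P : Matrix (Fin N) (Fin M) ℝ) : Prop :=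
  ∃ g : Fin M → Fin N, Function.Injective g ∧
    ∀ i j, P i j = if i = g j then (1 : ℝ) else 0

/-!
The error splits as `u₂ - w₂ = e₂ + (u_D - 𝒫 u_D) + Φ (PᵀΦ)⁻¹ U e₁`, where `eᵢ` is the
difference between the full and the reduced solution of subsystem `i` and
`𝒫 = Φ (PᵀΦ)⁻¹ Pᵀ` is the DEIM projection; this is where `U u₁ = Pᵀ u_D` enters.
Each `eᵢ` solves `eᵢ' = Aᵢ eᵢ + rᵢ`, so Duhamel's formula
`eᵢ(t) = exp(t Aᵢ) eᵢ(0) + ∫₀ᵗ exp((t - τ) Aᵢ) rᵢ(τ) dτ` bounds it by `Cᵢ (‖eᵢ(0)‖ + ∫₀ᵗ ‖rᵢ‖)`.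

The middle term is the classical DEIM estimate `‖x - 𝒫 x‖ ≤ ‖(PᵀΦ)⁻¹‖ ‖x - ΦΦᵀ x‖`.
Since `𝒫 Φ = Φ`, we have `x - 𝒫 x = y - Φ w` with `y = x - ΦΦᵀ x ⊥ range Φ` and
`w = (PᵀΦ)⁻¹ Pᵀ y`. The vectors `y` and `Φ w` have the same orthogonal projection `q` onto
`range P`, and `‖Φ w‖ ≤ ‖(PᵀΦ)⁻¹‖ ‖q‖`; Pythagoras and Cauchy–Schwarz around `q` then give
`‖y - Φ w‖ ≤ ‖(PᵀΦ)⁻¹‖ ‖y‖`.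
-/

open scoped RealInnerProductSpace
open NormedSpace intervalIntegral Set

-- `q` plays the role of the common orthogonal projection of `y` and `v` onto a subspace.
theorem norm_sub_le_mul_norm_of_inner_eq_zero {E : Type*} [NormedAddCommGroup E]
    [InnerProductSpace ℝ E] {y v q : E} {c : ℝ} (hc : 1 ≤ c) (hyv : ⟪y, v⟫ = 0)
    (hy : ⟪q, y - q⟫ = 0) (hv : ⟪q, v - q⟫ = 0) (hvq : ‖v‖ ≤ c * ‖q‖) :
    ‖y - v‖ ≤ c * ‖y‖ := by
  have pythagoras {x : E} (hx : ⟪q, x - q⟫ = 0) : ‖x‖ ^ 2 = ‖q‖ ^ 2 + ‖x - q‖ ^ 2 := by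
    simpa [hx] using norm_add_sq_real q (x - q)
  have hq : ‖q‖ ^ 2 ≤ ‖y - q‖ * ‖v - q‖ := by
    have : ⟪y, v⟫ = ‖q‖ ^ 2 + ⟪y - q, v - q⟫ := by
      simp only [inner_sub_left, inner_sub_right, real_inner_comm q y,
        real_inner_self_eq_norm_sq] at hy hv ⊢
      linarith
    linarith [neg_abs_le ⟪y - q, v - q⟫, abs_real_inner_le_norm (y - q) (v - q)]
  have hsq : ‖y - v‖ ^ 2 ≤ (c * ‖y‖) ^ 2 := by
    rw [norm_sub_sq_real, hyv, mul_pow, pythagoras hy]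
    have hv2 := pythagoras hv
    have hvq2 : ‖v‖ ^ 2 ≤ c ^ 2 * ‖q‖ ^ 2 := by
      rw [← mul_pow]; exact pow_le_pow_left₀ (norm_nonneg _) hvq 2
    have hβ : ‖v - q‖ ^ 2 ≤ (c ^ 2 - 1) * ‖q‖ ^ 2 := by linarith
    have hα : ‖q‖ ^ 2 ≤ (c ^ 2 - 1) * ‖y - q‖ ^ 2 := by
      rcases (norm_nonneg q).eq_or_lt with h0 | hpos
      · rw [← h0, zero_pow two_ne_zero]
        exact mul_nonneg (by nlinarith) (sq_nonneg _)
      · have : ‖q‖ ^ 2 * ‖q‖ ^ 2 ≤ ‖q‖ ^ 2 * ((c ^ 2 - 1) * ‖y - q‖ ^ 2) := by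
          calc ‖q‖ ^ 2 * ‖q‖ ^ 2 ≤ (‖y - q‖ * ‖v - q‖) * (‖y - q‖ * ‖v - q‖) := by gcongr
            _ = ‖y - q‖ ^ 2 * ‖v - q‖ ^ 2 := by ring
            _ ≤ ‖y - q‖ ^ 2 * ((c ^ 2 - 1) * ‖q‖ ^ 2) := by gcongr
            _ = _ := by ring
        exact le_of_mul_le_mul_left this (by positivity)
    linarith
  exact le_of_sq_le_sq (by simpa using hsq) (by positivity)

lemma norm_le_one_of_transpose_mul_self {m n : Type*} [Fintype m] [Fintype n] [DecidableEq n]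
    {Φ : Matrix m n ℝ} (hΦ : Φᵀ * Φ = 1) : ‖Φ‖ ≤ 1 := by
  have h1 : ‖(1 : Matrix n n ℝ)‖ ≤ 1 := by
    rw [cstar_norm_def, map_one]; exact ContinuousLinearMap.norm_id_le
  have : ‖Φ‖ * ‖Φ‖ ≤ 1 := by
    rwa [← l2_opNorm_conjTranspose_mul_self, conjTranspose_eq_transpose_of_trivial, hΦ]
  nlinarith [norm_nonneg Φ]

section mulVecE
variable {k m n : ℕ}

lemma mulVecE_mulVecE (A : Matrix (Fin m) (Fin n) ℝ) (B : Matrix (Fin n) (Fin k) ℝ)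
    (x : EuclideanSpace ℝ (Fin k)) : mulVecE A (mulVecE B x) = mulVecE (A * B) x := by
  simp [mulVecE]

lemma mulVecE_one (x : EuclideanSpace ℝ (Fin n)) : mulVecE 1 x = x := by
  simp [mulVecE]

lemma mulVecE_sub (A : Matrix (Fin m) (Fin n) ℝ) (x y : EuclideanSpace ℝ (Fin n)) :
    mulVecE A (x - y) = mulVecE A x - mulVecE A y :=
  map_sub _ x y

lemma norm_mulVecE_le (A : Matrix (Fin m) (Fin n) ℝ) (x : EuclideanSpace ℝ (Fin n)) :
    ‖mulVecE A x‖ ≤ ‖A‖ * ‖x‖ :=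
  l2_opNorm_mulVec A x

lemma inner_mulVecE_left (A : Matrix (Fin m) (Fin n) ℝ) (x : EuclideanSpace ℝ (Fin n))
    (y : EuclideanSpace ℝ (Fin m)) : ⟪mulVecE A x, y⟫ = ⟪x, mulVecE Aᵀ y⟫ := by
  rw [mulVecE, mulVecE, ← conjTranspose_eq_transpose_of_trivial,
    toEuclideanLin_conjTranspose_eq_adjoint, LinearMap.adjoint_inner_right]

lemma norm_mulVecE_of_transpose_mul_self {Φ : Matrix (Fin m) (Fin n) ℝ} (hΦ : Φᵀ * Φ = 1)
    (x : EuclideanSpace ℝ (Fin n)) : ‖mulVecE Φ x‖ = ‖x‖ := by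
  rw [← sq_eq_sq₀ (norm_nonneg _) (norm_nonneg _), ← real_inner_self_eq_norm_sq,
    ← real_inner_self_eq_norm_sq, inner_mulVecE_left, mulVecE_mulVecE, hΦ, mulVecE_one]

lemma continuous_mulVecE (A : Matrix (Fin m) (Fin n) ℝ) : Continuous (mulVecE A) :=
  (toEuclideanLin A).continuous_of_finiteDimensional

lemma HasDerivAt.mulVecE_left (A : Matrix (Fin m) (Fin n) ℝ) {x : ℝ → EuclideanSpace ℝ (Fin n)}
    {x' : EuclideanSpace ℝ (Fin n)} {t : ℝ} (hx : HasDerivAt x x' t) :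
    HasDerivAt (fun τ ↦ mulVecE A (x τ)) (mulVecE A x') t :=
  (LinearMap.toContinuousLinearMap (toEuclideanLin A)).hasFDerivAt.comp_hasDerivAt t hx

end mulVecE

lemma IsSelectionMatrix.transpose_mul_self {N M : ℕ} {P : Matrix (Fin N) (Fin M) ℝ}
    (hP : IsSelectionMatrix P) : Pᵀ * P = 1 := by
  obtain ⟨g, hg, hgP⟩ := hP
  ext i j
  simp [Matrix.mul_apply, hgP, Matrix.one_apply, hg.eq_iff, eq_comm]

lemma inner_mulVecE_mul_transpose_sub_self {N M : ℕ} {P : Matrix (Fin N) (Fin M) ℝ}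
    (hP : Pᵀ * P = 1) (z : EuclideanSpace ℝ (Fin N)) :
    ⟪mulVecE (P * Pᵀ) z, z - mulVecE (P * Pᵀ) z⟫ = 0 := by
  rw [← mulVecE_mulVecE, inner_mulVecE_left, mulVecE_sub, mulVecE_mulVecE Pᵀ P, hP,
    mulVecE_one, sub_self, inner_zero_right]

lemma norm_sub_deim_le {N M : ℕ} (hM : 0 < M) {Φ P : Matrix (Fin N) (Fin M) ℝ}
    (hΦ : Φᵀ * Φ = 1) (hP : Pᵀ * P = 1) (hinv : IsUnit (Pᵀ * Φ))
    (x : EuclideanSpace ℝ (Fin N)) :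
    ‖x - mulVecE (Φ * (Pᵀ * Φ)⁻¹ * Pᵀ) x‖ ≤ ‖(Pᵀ * Φ)⁻¹‖ * ‖x - mulVecE (Φ * Φᵀ) x‖ := by
  set B := Pᵀ * Φ with hB
  have hdet : IsUnit B.det := (isUnit_iff_isUnit_det B).mp hinv
  have hc : 1 ≤ ‖B⁻¹‖ := by
    have : Nonempty (Fin M) := ⟨⟨0, hM⟩⟩
    have hPt : ‖Pᵀ‖ ≤ 1 := by
      rw [← conjTranspose_eq_transpose_of_trivial, l2_opNorm_conjTranspose]
      exact norm_le_one_of_transpose_mul_self hP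
    calc (1 : ℝ) = ‖B⁻¹ * B‖ := by rw [nonsing_inv_mul B hdet, norm_one]
      _ ≤ ‖B⁻¹‖ * (‖Pᵀ‖ * ‖Φ‖) := (l2_opNorm_mul _ _).trans (by gcongr; exact l2_opNorm_mul _ _)
      _ ≤ ‖B⁻¹‖ * (1 * 1) := by gcongr; exact norm_le_one_of_transpose_mul_self hΦ
      _ = ‖B⁻¹‖ := by ring
  set y := x - mulVecE (Φ * Φᵀ) x with hy
  set w := mulVecE (B⁻¹ * Pᵀ) y with hw
  have hΦy : mulVecE Φᵀ y = 0 := by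
    rw [hy, mulVecE_sub, mulVecE_mulVecE, ← Matrix.mul_assoc, hΦ, Matrix.one_mul, sub_self]
  have hsplit : x - mulVecE (Φ * B⁻¹ * Pᵀ) x = y - mulVecE Φ w := by
    have hℙ : mulVecE (Φ * B⁻¹ * Pᵀ) (mulVecE (Φ * Φᵀ) x) = mulVecE (Φ * Φᵀ) x := by
      rw [mulVecE_mulVecE, show Φ * B⁻¹ * Pᵀ * (Φ * Φᵀ) = Φ * (B⁻¹ * B) * Φᵀ by
        simp only [hB, Matrix.mul_assoc], nonsing_inv_mul B hdet, Matrix.mul_one]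
    rw [hw, mulVecE_mulVecE, ← Matrix.mul_assoc, hy, mulVecE_sub (Φ * B⁻¹ * Pᵀ), hℙ]
    abel
  have hPv : mulVecE Pᵀ (mulVecE Φ w) = mulVecE Pᵀ y := by
    rw [hw, mulVecE_mulVecE, mulVecE_mulVecE, ← Matrix.mul_assoc, ← hB,
      mul_nonsing_inv B hdet, Matrix.one_mul]
  have hq : mulVecE (P * Pᵀ) (mulVecE Φ w) = mulVecE (P * Pᵀ) y := by
    rw [← mulVecE_mulVecE, hPv, mulVecE_mulVecE]
  rw [hsplit]
  refine norm_sub_le_mul_norm_of_inner_eq_zero hc ?_ (inner_mulVecE_mul_transpose_sub_self hP y)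
    (hq ▸ inner_mulVecE_mul_transpose_sub_self hP _) ?_
  · rw [real_inner_comm, inner_mulVecE_left, hΦy, inner_zero_right]
  · calc ‖mulVecE Φ w‖ = ‖mulVecE B⁻¹ (mulVecE B w)‖ := by
          rw [norm_mulVecE_of_transpose_mul_self hΦ, mulVecE_mulVecE, nonsing_inv_mul B hdet,
            mulVecE_one]
      _ ≤ ‖B⁻¹‖ * ‖mulVecE B w‖ := norm_mulVecE_le _ _
      _ = ‖B⁻¹‖ * ‖mulVecE Pᵀ (mulVecE Φ w)‖ := by rw [mulVecE_mulVecE Pᵀ Φ w]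
      _ = ‖B⁻¹‖ * ‖mulVecE (P * Pᵀ) y‖ := by
          rw [← hq, ← mulVecE_mulVecE, norm_mulVecE_of_transpose_mul_self hP]

section Duhamel
variable {E : Type*} [NormedAddCommGroup E] [NormedSpace ℝ E] [CompleteSpace E]

theorem eq_exp_smul_apply_add_integral_of_hasDerivAt (A : E →L[ℝ] E) {e r : ℝ → E} {t : ℝ}
    (ht : 0 ≤ t) (hr : ContinuousOn r (Icc 0 t))
    (he : ∀ τ ∈ Icc 0 t, HasDerivAt e (A (e τ) + r τ) τ) :
    e t = exp (t • A) (e 0) + ∫ τ in 0..t, exp ((t - τ) • A) (r τ) := by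
  have hexp (τ : ℝ) : HasDerivAt (fun σ ↦ exp ((t - σ) • A)) (-(exp ((t - τ) • A) * A)) τ := by
    simpa [Function.comp_def] using
      (hasDerivAt_exp_smul_const A (t - τ)).scomp τ ((hasDerivAt_id τ).const_sub t)
  have hderiv : ∀ τ ∈ uIcc 0 t,
      HasDerivAt (fun σ ↦ exp ((t - σ) • A) (e σ)) (exp ((t - τ) • A) (r τ)) τ := by
    intro τ hτ
    rw [uIcc_of_le ht] at hτ
    convert (hexp τ).clm_apply (he τ hτ) using 1
    simp
  have hcont : ContinuousOn (fun τ ↦ exp ((t - τ) • A) (r τ)) (uIcc 0 t) :=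
    (continuous_iff_continuousAt.2 fun τ ↦ (hexp τ).continuousAt).continuousOn.clm_apply
      (by rwa [uIcc_of_le ht])
  rw [integral_eq_sub_of_hasDerivAt hderiv hcont.intervalIntegrable]
  simp

theorem norm_le_of_hasDerivAt_clm_apply_add (A : E →L[ℝ] E) {e r : ℝ → E} {t C : ℝ}
    (ht : 0 ≤ t) (hexp : ∀ s ∈ Icc 0 t, ‖exp (s • A)‖ ≤ C) (hr : ContinuousOn r (Icc 0 t))
    (he : ∀ τ ∈ Icc 0 t, HasDerivAt e (A (e τ) + r τ) τ) :
    ‖e t‖ ≤ C * ‖e 0‖ + C * ∫ τ in 0..t, ‖r τ‖ := by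
  have hint : ‖∫ τ in 0..t, exp ((t - τ) • A) (r τ)‖ ≤ C * ∫ τ in 0..t, ‖r τ‖ := by
    rw [← integral_const_mul]
    refine norm_integral_le_of_norm_le ht ?_ ?_
    · refine Filter.Eventually.of_forall fun τ hτ ↦ ?_
      have hs : t - τ ∈ Icc 0 t := ⟨by linarith [hτ.2], by linarith [hτ.1]⟩
      exact (exp ((t - τ) • A)).le_of_opNorm_le (hexp _ hs) _
    · exact (continuousOn_const.mul hr.norm).intervalIntegrable_of_Icc ht
  rw [eq_exp_smul_apply_add_integral_of_hasDerivAt A ht hr he]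
  calc _ ≤ ‖exp (t • A) (e 0)‖ + ‖∫ τ in 0..t, exp ((t - τ) • A) (r τ)‖ := norm_add_le _ _
    _ ≤ _ := by
      gcongr
      exact (exp (t • A)).le_of_opNorm_le (hexp t ⟨ht, le_rfl⟩) _

end Duhamel

lemma toEuclideanCLM_exp {𝕜 ι : Type*} [RCLike 𝕜] [Fintype ι] [DecidableEq ι]
    (A : Matrix ι ι 𝕜) :
    toEuclideanCLM (n := ι) (𝕜 := 𝕜) (exp A) = exp (toEuclideanCLM (n := ι) (𝕜 := 𝕜) A) :=
  map_exp_of_mem_ball (𝕂 := 𝕜) _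
    (AddMonoidHomClass.continuous_of_bound _ 1 fun B ↦ by rw [one_mul, ← cstar_norm_def]) A
    ((expSeries_radius_eq_top 𝕜 (Matrix ι ι 𝕜)).symm ▸ edist_lt_top _ _)

section ReducedOrderModel
variable {n : ℕ}

theorem norm_le_of_hasDerivAt_mulVecE_add (A : Matrix (Fin n) (Fin n) ℝ)
    {e r : ℝ → EuclideanSpace ℝ (Fin n)} {t C : ℝ} (ht : 0 ≤ t)
    (hexp : ∀ s ∈ Icc 0 t, ‖exp (s • A)‖ ≤ C) (hr : ContinuousOn r (Icc 0 t))
    (he : ∀ τ ∈ Icc 0 t, HasDerivAt e (mulVecE A (e τ) + r τ) τ) :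
    ‖e t‖ ≤ C * ‖e 0‖ + C * ∫ τ in 0..t, ‖r τ‖ :=
  norm_le_of_hasDerivAt_clm_apply_add (toEuclideanCLM (n := Fin n) (𝕜 := ℝ) A) ht
    (fun s hs ↦ by rw [← map_smul, ← toEuclideanCLM_exp]; exact hexp s hs) hr he

theorem norm_sub_mulVecE_le_of_residual {N : ℕ} (A : Matrix (Fin N) (Fin N) ℝ)
    (V : Matrix (Fin N) (Fin n) ℝ) {T C t : ℝ} (ht : t ∈ Icc 0 T)
    (hexp : ∀ s ∈ Icc 0 T, ‖exp (s • A)‖ ≤ C) {f u r : ℝ → EuclideanSpace ℝ (Fin N)}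
    {un un' : ℝ → EuclideanSpace ℝ (Fin n)} (hf : ContinuousOn f (Icc 0 T))
    (hu : ∀ τ ∈ Icc 0 T, HasDerivAt u (mulVecE A (u τ) + f τ) τ)
    (hun : ∀ τ ∈ Icc 0 T, HasDerivAt un (un' τ) τ) (hun' : ContinuousOn un' (Icc 0 T))
    (hr : ∀ τ, r τ = mulVecE A (mulVecE V (un τ)) + f τ - mulVecE V (un' τ)) :
    ‖u t - mulVecE V (un t)‖ ≤ C * ‖u 0 - mulVecE V (un 0)‖ + C * ∫ τ in 0..t, ‖r τ‖ := by
  have hsub : Icc 0 t ⊆ Icc 0 T := Icc_subset_Icc_right ht.2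
  have hr_cont : ContinuousOn r (Icc 0 T) := by
    have hun_cont : ContinuousOn un (Icc 0 T) := fun τ hτ ↦
      (hun τ hτ).continuousAt.continuousWithinAt
    rw [funext hr]
    exact (((continuous_mulVecE A).comp_continuousOn
      ((continuous_mulVecE V).comp_continuousOn hun_cont)).add hf).sub
        ((continuous_mulVecE V).comp_continuousOn hun')
  refine norm_le_of_hasDerivAt_mulVecE_add A (e := fun τ ↦ u τ - mulVecE V (un τ)) ht.1
    (fun s hs ↦ hexp s (hsub hs)) (hr_cont.mono hsub) fun τ hτ ↦ ?_
  refine ((hu τ (hsub hτ)).sub ((hun τ (hsub hτ)).mulVecE_left V)).congr_deriv ?_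
  rw [hr τ, mulVecE_sub, mulVecE_mulVecE]
  abel

end ReducedOrderModel

theorem stmt11_general {N₁ N₂ M n₁ n₂ : ℕ} (T : ℝ)
    (A₁ : Matrix (Fin N₁) (Fin N₁) ℝ) (A₂ : Matrix (Fin N₂) (Fin N₂) ℝ)
    (C₁ C₂ : ℝ)
    (hexp₁ : ∀ s ∈ Set.Icc (0 : ℝ) T, ‖NormedSpace.exp (s • A₁)‖ ≤ C₁)
    (hexp₂ : ∀ s ∈ Set.Icc (0 : ℝ) T, ‖NormedSpace.exp (s • A₂)‖ ≤ C₂)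
    (hM : 0 < M)
    (Φ P : Matrix (Fin N₂) (Fin M) ℝ)
    (hΦ : Φᵀ * Φ = 1)
    (hP : IsSelectionMatrix P)
    (hinv : IsUnit (Pᵀ * Φ))
    (U : Matrix (Fin M) (Fin N₁) ℝ)
    (C₃ : ℝ) (hC₃ : C₃ = ‖Φ * (Pᵀ * Φ)⁻¹ * U‖)
    (f₁ : ℝ → EuclideanSpace ℝ (Fin N₁)) (hf₁ : ContinuousOn f₁ (Set.Icc 0 T))
    (g₂ : ℝ → EuclideanSpace ℝ (Fin N₂)) (hg₂ : ContinuousOn g₂ (Set.Icc 0 T))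
    (u₁ : ℝ → EuclideanSpace ℝ (Fin N₁))
    (hu₁ : ∀ t ∈ Set.Icc (0 : ℝ) T, HasDerivAt u₁ (mulVecE A₁ (u₁ t) + f₁ t) t)
    (uD : ℝ → EuclideanSpace ℝ (Fin N₂))
    (huD : ∀ t ∈ Set.Icc (0 : ℝ) T, mulVecE U (u₁ t) = mulVecE Pᵀ (uD t))
    (ut₂ : ℝ → EuclideanSpace ℝ (Fin N₂))
    (hut₂ : ∀ t ∈ Set.Icc (0 : ℝ) T, HasDerivAt ut₂ (mulVecE A₂ (ut₂ t) + g₂ t) t)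
    (u₂ : ℝ → EuclideanSpace ℝ (Fin N₂)) (hu₂ : ∀ t : ℝ, u₂ t = ut₂ t + uD t)
    (V₁ : Matrix (Fin N₁) (Fin n₁) ℝ) (V₂ : Matrix (Fin N₂) (Fin n₂) ℝ)
    (un₁ un₁' : ℝ → EuclideanSpace ℝ (Fin n₁))
    (hun₁ : ∀ t ∈ Set.Icc (0 : ℝ) T, HasDerivAt un₁ (un₁' t) t)
    (hun₁' : ContinuousOn un₁' (Set.Icc 0 T))
    (utn₂ utn₂' : ℝ → EuclideanSpace ℝ (Fin n₂))
    (hutn₂ : ∀ t ∈ Set.Icc (0 : ℝ) T, HasDerivAt utn₂ (utn₂' t) t)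
    (hutn₂' : ContinuousOn utn₂' (Set.Icc 0 T))
    (r₁ : ℝ → EuclideanSpace ℝ (Fin N₁))
    (hr₁ : ∀ t : ℝ, r₁ t = mulVecE A₁ (mulVecE V₁ (un₁ t)) + f₁ t - mulVecE V₁ (un₁' t))
    (r₂ : ℝ → EuclideanSpace ℝ (Fin N₂))
    (hr₂ : ∀ t : ℝ, r₂ t = mulVecE A₂ (mulVecE V₂ (utn₂ t)) + g₂ t - mulVecE V₂ (utn₂' t))
    (w₂ : ℝ → EuclideanSpace ℝ (Fin N₂))
    (hw₂ : ∀ t : ℝ, w₂ t = mulVecE V₂ (utn₂ t) + mulVecE (Φ * (Pᵀ * Φ)⁻¹ * U * V₁) (un₁ t)) :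
    ∀ t ∈ Set.Icc (0 : ℝ) T,
      ‖u₂ t - w₂ t‖ ≤
        C₂ * ‖ut₂ 0 - mulVecE V₂ (utn₂ 0)‖ + C₂ * (∫ τ in (0 : ℝ)..t, ‖r₂ τ‖)
        + ‖(Pᵀ * Φ)⁻¹‖ * ‖uD t - mulVecE (Φ * Φᵀ) (uD t)‖
        + C₁ * C₃ * ‖u₁ 0 - mulVecE V₁ (un₁ 0)‖
        + C₁ * C₃ * ∫ τ in (0 : ℝ)..t, ‖r₁ τ‖ := by
  intro t ht
  have hb₁ := norm_sub_mulVecE_le_of_residual A₁ V₁ ht hexp₁ hf₁ hu₁ hun₁ hun₁' hr₁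
  have hb₂ := norm_sub_mulVecE_le_of_residual A₂ V₂ ht hexp₂ hg₂ hut₂ hutn₂ hutn₂' hr₂
  have hdeim := norm_sub_deim_le hM hΦ hP.transpose_mul_self hinv (uD t)
  have hsplit : u₂ t - w₂ t = (ut₂ t - mulVecE V₂ (utn₂ t))
      + (uD t - mulVecE (Φ * (Pᵀ * Φ)⁻¹ * Pᵀ) (uD t))
      + mulVecE (Φ * (Pᵀ * Φ)⁻¹ * U) (u₁ t - mulVecE V₁ (un₁ t)) := by
    rw [hu₂, hw₂, mulVecE_sub, ← mulVecE_mulVecE _ U, huD t ht, mulVecE_mulVecE,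
      mulVecE_mulVecE]
    abel
  have hlift : ‖mulVecE (Φ * (Pᵀ * Φ)⁻¹ * U) (u₁ t - mulVecE V₁ (un₁ t))‖
      ≤ C₃ * (C₁ * ‖u₁ 0 - mulVecE V₁ (un₁ 0)‖ + C₁ * ∫ τ in 0..t, ‖r₁ τ‖) := by
    rw [hC₃]
    exact (norm_mulVecE_le _ _).trans (by gcongr)
  rw [hsplit]
  linarith [norm_add₃_le (a := ut₂ t - mulVecE V₂ (utn₂ t))
    (b := uD t - mulVecE (Φ * (Pᵀ * Φ)⁻¹ * Pᵀ) (uD t))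
    (c := mulVecE (Φ * (Pᵀ * Φ)⁻¹ * U) (u₁ t - mulVecE V₁ (un₁ t)))]

/-- A posteriori error estimate for the unsteady one-way coupled ROM
(`ũ₂` is written `ut₂`, `ũ_{n₂}` is written `utn₂`):
`‖u₂(t) − w₂(t)‖₂ ≤ C₂‖ũ₂(0) − V₂ũ_{n₂}(0)‖₂ + C₂∫₀ᵗ‖r₂‖₂ + ‖(PᵀΦ)⁻¹‖₂‖u_D(t) − ΦΦᵀu_D(t)‖₂
 + C₁C₃‖u₁(0) − V₁u_{n₁}(0)‖₂ + C₁C₃∫₀ᵗ‖r₁‖₂`. -/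
theorem stmt11 {N₁ N₂ M n₁ n₂ : ℕ} (T : ℝ) (hT : 0 < T)
    (A₁ : Matrix (Fin N₁) (Fin N₁) ℝ) (A₂ : Matrix (Fin N₂) (Fin N₂) ℝ)
    (C₁ C₂ : ℝ) (hC₁ : 0 ≤ C₁) (hC₂ : 0 ≤ C₂)
    (hexp₁ : ∀ s ∈ Set.Icc (0 : ℝ) T, ‖NormedSpace.exp (s • A₁)‖ ≤ C₁)
    (hexp₂ : ∀ s ∈ Set.Icc (0 : ℝ) T, ‖NormedSpace.exp (s • A₂)‖ ≤ C₂)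
    (hM : 0 < M) (hMN : M < N₂)
    (Φ P : Matrix (Fin N₂) (Fin M) ℝ)
    (hΦ : Φᵀ * Φ = 1)
    (hP : IsSelectionMatrix P)
    (hinv : IsUnit (Pᵀ * Φ))
    (U : Matrix (Fin M) (Fin N₁) ℝ)
    (C₃ : ℝ) (hC₃ : C₃ = ‖Φ * (Pᵀ * Φ)⁻¹ * U‖)
    (f₁ : ℝ → EuclideanSpace ℝ (Fin N₁)) (hf₁ : ContinuousOn f₁ (Set.Icc 0 T))
    (g₂ : ℝ → EuclideanSpace ℝ (Fin N₂)) (hg₂ : ContinuousOn g₂ (Set.Icc 0 T))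
    (u₁ : ℝ → EuclideanSpace ℝ (Fin N₁))
    (hu₁ : ∀ t ∈ Set.Icc (0 : ℝ) T, HasDerivAt u₁ (mulVecE A₁ (u₁ t) + f₁ t) t)
    (uD : ℝ → EuclideanSpace ℝ (Fin N₂))
    (huD : ∀ t ∈ Set.Icc (0 : ℝ) T, mulVecE U (u₁ t) = mulVecE Pᵀ (uD t))
    (ut₂ : ℝ → EuclideanSpace ℝ (Fin N₂))
    (hut₂ : ∀ t ∈ Set.Icc (0 : ℝ) T, HasDerivAt ut₂ (mulVecE A₂ (ut₂ t) + g₂ t) t)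
    (u₂ : ℝ → EuclideanSpace ℝ (Fin N₂)) (hu₂ : ∀ t : ℝ, u₂ t = ut₂ t + uD t)
    (V₁ : Matrix (Fin N₁) (Fin n₁) ℝ) (V₂ : Matrix (Fin N₂) (Fin n₂) ℝ)
    (un₁ un₁' : ℝ → EuclideanSpace ℝ (Fin n₁))
    (hun₁ : ∀ t ∈ Set.Icc (0 : ℝ) T, HasDerivAt un₁ (un₁' t) t)
    (hun₁' : ContinuousOn un₁' (Set.Icc 0 T))
    (utn₂ utn₂' : ℝ → EuclideanSpace ℝ (Fin n₂))
    (hutn₂ : ∀ t ∈ Set.Icc (0 : ℝ) T, HasDerivAt utn₂ (utn₂' t) t)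
    (hutn₂' : ContinuousOn utn₂' (Set.Icc 0 T))
    (r₁ : ℝ → EuclideanSpace ℝ (Fin N₁))
    (hr₁ : ∀ t : ℝ, r₁ t = mulVecE A₁ (mulVecE V₁ (un₁ t)) + f₁ t - mulVecE V₁ (un₁' t))
    (r₂ : ℝ → EuclideanSpace ℝ (Fin N₂))
    (hr₂ : ∀ t : ℝ, r₂ t = mulVecE A₂ (mulVecE V₂ (utn₂ t)) + g₂ t - mulVecE V₂ (utn₂' t))
    (w₂ : ℝ → EuclideanSpace ℝ (Fin N₂))
    (hw₂ : ∀ t : ℝ, w₂ t = mulVecE V₂ (utn₂ t) + mulVecE (Φ * (Pᵀ * Φ)⁻¹ * U * V₁) (un₁ t)) :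
    ∀ t ∈ Set.Icc (0 : ℝ) T,
      ‖u₂ t - w₂ t‖ ≤
        C₂ * ‖ut₂ 0 - mulVecE V₂ (utn₂ 0)‖ + C₂ * (∫ τ in (0 : ℝ)..t, ‖r₂ τ‖)
        + ‖(Pᵀ * Φ)⁻¹‖ * ‖uD t - mulVecE (Φ * Φᵀ) (uD t)‖
        + C₁ * C₃ * ‖u₁ 0 - mulVecE V₁ (un₁ 0)‖
        + C₁ * C₃ * ∫ τ in (0 : ℝ)..t, ‖r₁ τ‖ :=
  stmt11_general T A₁ A₂ C₁ C₂ hexp₁ hexp₂ hM Φ P hΦ hP hinv U C₃ hC₃ f₁ hf₁ g₂ hg₂ u₁ hu₁ uD huD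
    ut₂ hut₂ u₂ hu₂ V₁ V₂ un₁ un₁' hun₁ hun₁' utn₂ utn₂' hutn₂ hutn₂' r₁ hr₁ r₂ hr₂ w₂ hw₂
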